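/- arXiv:2310.04534 — 8 statements merged into one kernel-verified Lean document; each statement's English description precedes it below -/
import Mathlib

section
/- If f : ℤ → ℤ is a near-endomorphism, then the sequence (f(n)/n)_{n ≥ 1} (with values in ℚ or ℝ) is a Cauchy sequence. -/
theorem near_endo_ratio_cauchy (f : ℤ → ℤ)
    (h : ∃ C : ℤ, 0 < C ∧ ∀ a b : ℤ, |f (a + b) - f a - f b| < C) :
    CauchySeq (fun n : ℕ => (f (n + 1) : ℝ) / (n + 1)) := by
  obtain ⟨C, hC, hf⟩ := h
  -- key: |f(k*n) - k*f(n)| < (k+1)*C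
  have key : ∀ k : ℕ, ∀ n : ℤ, |f (k * n) - k * f n| < (k + 1) * C := by
    intro k
    induction k with
    | zero =>
      intro n
      have := hf 0 0
      simp only [add_zero, Nat.cast_zero, zero_mul, sub_zero] at *
      have : |f 0| < C := by
        have h2 : |f 0 - f 0 - f 0| < C := this
        simpa [abs_sub_comm] using h2
      linarith [this]
    | succ k ih =>
      intro n
      have h1 := ih n
      have h2 := hf (k * n) n
      have e : f ((k + 1 : ℕ) * n) - (k + 1 : ℕ) * f n
          = (f (k * n + n) - f (k * n) - f n) + (f (k * n) - k * f n) := by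
        push_cast
        ring
      calc |f ((k + 1 : ℕ) * n) - (k + 1 : ℕ) * f n|
          ≤ |f (k * n + n) - f (k * n) - f n| + |f (k * n) - k * f n| := by
            rw [e]; exact abs_add_le _ _
        _ < C + (k + 1) * C := by exact add_lt_add h2 h1
        _ = ((k + 1 : ℕ) + 1) * C := by push_cast; ring
  -- cross estimate for positive integers p = m+1, q = n+1
  have cross : ∀ m n : ℕ,
      |((n : ℤ) + 1) * f (m + 1) - ((m : ℤ) + 1) * f (n + 1)| < (((m : ℤ) + 1) + ((n : ℤ) + 1) + 2) * C := by
    intro m n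
    have h1 := key (n + 1) ((m : ℤ) + 1)
    have h2 := key (m + 1) ((n : ℤ) + 1)
    have e : ((n : ℤ) + 1) * f (m + 1) - ((m : ℤ) + 1) * f (n + 1)
        = -(f (((n : ℕ) + 1) * ((m : ℤ) + 1)) - ((n : ℕ) + 1 : ℤ) * f ((m : ℤ) + 1))
          + (f (((m : ℕ) + 1) * ((n : ℤ) + 1)) - ((m : ℕ) + 1 : ℤ) * f ((n : ℤ) + 1)) := by
      push_cast
      have : ((n : ℤ) + 1) * ((m : ℤ) + 1) = ((m : ℤ) + 1) * ((n : ℤ) + 1) := by ring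
      rw [this]
      ring
    calc |((n : ℤ) + 1) * f (m + 1) - ((m : ℤ) + 1) * f (n + 1)|
        ≤ |f (((n : ℕ) + 1) * ((m : ℤ) + 1)) - ((n : ℕ) + 1 : ℤ) * f ((m : ℤ) + 1)|
          + |f (((m : ℕ) + 1) * ((n : ℤ) + 1)) - ((m : ℕ) + 1 : ℤ) * f ((n : ℤ) + 1)| := by
          rw [e]; exact (abs_add_le _ _).trans (by rw [abs_neg])
      _ < (((n : ℕ) + 1 : ℤ) + 1) * C + (((m : ℕ) + 1 : ℤ) + 1) * C := add_lt_add h1 h2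
      _ = (((m : ℤ) + 1) + ((n : ℤ) + 1) + 2) * C := by push_cast; ring
  rw [Metric.cauchySeq_iff]
  intro ε hε
  have hCR : (0 : ℝ) < C := by exact_mod_cast hC
  obtain ⟨N, hN⟩ := exists_nat_gt (4 * (C : ℝ) / ε)
  refine ⟨N, fun m hm n hn => ?_⟩
  set p : ℝ := (m : ℝ) + 1 with hp
  set q : ℝ := (n : ℝ) + 1 with hq
  clear_value p q
  have hpp : (0 : ℝ) < p := by rw [hp]; positivity
  have hqq : (0 : ℝ) < q := by rw [hq]; positivity
  have hpN : (N : ℝ) + 1 ≤ p := by simp [hp]; exact_mod_cast hm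
  have hqN : (N : ℝ) + 1 ≤ q := by simp [hq]; exact_mod_cast hn
  have hN1 : (0 : ℝ) < (N : ℝ) + 1 := by positivity
  have hcr := cross m n
  have hcrR : |q * (f (m + 1) : ℝ) - p * (f (n + 1) : ℝ)| < (p + q + 2) * C := by
    have h' : ((|((n:ℤ) + 1) * f (m + 1) - ((m:ℤ) + 1) * f (n + 1)| : ℤ) : ℝ)
        < ((((m:ℤ) + 1 + ((n:ℤ) + 1) + 2) * C : ℤ) : ℝ) := by exact_mod_cast hcr
    push_cast at h'
    simpa [hp, hq] using h'
  rw [Real.dist_eq]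
  have hrw : (f (m + 1) : ℝ) / p - (f (n + 1) : ℝ) / q
      = (q * (f (m + 1) : ℝ) - p * (f (n + 1) : ℝ)) / (p * q) := by
    field_simp
  have key2 : |(f (m + 1) : ℝ) / p - (f (n + 1) : ℝ) / q| < (p + q + 2) * C / (p * q) := by
    rw [hrw, abs_div, abs_of_pos (by positivity : (0:ℝ) < p * q)]
    gcongr
  have bound : (p + q + 2) * C / (p * q) ≤ 4 * C / ((N : ℝ) + 1) := by
    have h1p : 1 ≤ p := by nlinarith
    have h1q : 1 ≤ q := by nlinarith
    rw [div_le_div_iff₀ (by positivity) hN1]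
    have hA : p * ((N:ℝ)+1) ≤ p * q := by nlinarith
    have hB : q * ((N:ℝ)+1) ≤ p * q := by nlinarith
    have hD : ((N:ℝ)+1) ≤ p * q := by nlinarith
    have hsum : (p + q + 2) * ((N:ℝ)+1) ≤ 4 * (p * q) := by nlinarith
    linarith [mul_le_mul_of_nonneg_right hsum hCR.le]
  have final : 4 * (C : ℝ) / ((N : ℝ) + 1) < ε := by
    rw [div_lt_iff₀ hN1]
    have : 4 * (C : ℝ) / ε < N := hN
    rw [div_lt_iff₀ hε] at this
    nlinarith
  calc |(f (m + 1) : ℝ) / p - (f (n + 1) : ℝ) / q| < (p + q + 2) * C / (p * q) := key2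
    _ ≤ 4 * C / ((N : ℝ) + 1) := bound
    _ < ε := final
end

section
/- A near-endomorphism f : ℤ → ℤ satisfies lim_{n→∞} f(n)/n = 0 if and only if f is bounded (i.e., there exists B such that |f(n)| ≤ B for all n ∈ ℤ). -/
/-! Iterating the defect bound `C` gives `|f x| ≤ |f (n x)| / n + C` for every `n ≥ 1`. If
`f n / n → 0`, letting `n → ∞` bounds `f` by `C` on `ℕ`; on negative arguments `f (-x)` is within
`2 C` of `-f x`. -/

open Filter Topology

section NearAdditive

variable {G E : Type*} [SeminormedAddCommGroup E] {C : ℝ}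

theorem norm_map_succ_nsmul_sub_le [AddMonoid G] {f : G → E}
    (hf : ∀ a b, ‖f (a + b) - f a - f b‖ ≤ C) (x : G) (n : ℕ) :
    ‖f ((n + 1) • x) - (n + 1) • f x‖ ≤ n * C := by
  induction n with
  | zero => simp
  | succ n ih =>
    have hsplit : f ((n + 1 + 1) • x) - (n + 1 + 1) • f x =
        (f ((n + 1) • x + x) - f ((n + 1) • x) - f x) + (f ((n + 1) • x) - (n + 1) • f x) := by
      rw [succ_nsmul x (n + 1), succ_nsmul (f x) (n + 1)]
      abel
    calc _ ≤ C + n * C := hsplit ▸ norm_add_le_of_le (hf _ _) ih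
      _ = (n + 1 : ℕ) * C := by push_cast; ring

theorem norm_map_neg_le [AddGroup G] {f : G → E}
    (hf : ∀ a b, ‖f (a + b) - f a - f b‖ ≤ C) (x : G) :
    ‖f (-x)‖ ≤ ‖f x‖ + 2 * C := by
  have hzero : ‖f 0‖ ≤ C := by simpa using hf 0 0
  have hsplit : f 0 - f x - (f (x + -x) - f x - f (-x)) = f (-x) := by
    rw [add_neg_cancel]
    abel
  have htriangle := norm_sub_le (f 0 - f x) (f (x + -x) - f x - f (-x))
  rw [hsplit] at htriangle
  linarith [norm_sub_le (f 0) (f x), hf x (-x)]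

theorem abs_le_abs_map_succ_nsmul_div_add [AddMonoid G] {f : G → ℝ}
    (hf : ∀ a b, |f (a + b) - f a - f b| ≤ C) (x : G) (n : ℕ) :
    |f x| ≤ |f ((n + 1) • x)| / (n + 1) + C := by
  have hC : 0 ≤ C := (abs_nonneg _).trans (hf 0 0)
  have hdefect :=
    norm_map_succ_nsmul_sub_le (E := ℝ) (by simpa only [Real.norm_eq_abs] using hf) x n
  rw [Real.norm_eq_abs, nsmul_eq_mul] at hdefect
  have hscaled : (n + 1) * |f x| ≤ |f ((n + 1) • x)| + n * C := by
    calc (n + 1) * |f x| = |(n + 1) * f x| := by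
          rw [abs_mul, abs_of_pos (by positivity : (0 : ℝ) < n + 1)]
      _ ≤ |f ((n + 1) • x)| + |f ((n + 1) • x) - (n + 1) * f x| := by
          simpa only [Real.norm_eq_abs] using norm_le_norm_add_norm_sub (f ((n + 1) • x)) _
      _ ≤ |f ((n + 1) • x)| + n * C := by push_cast at hdefect ⊢; linarith
  rw [← sub_le_iff_le_add, le_div_iff₀ (by positivity)]
  nlinarith

end NearAdditive

theorem tendsto_abs_map_succ_mul_div_atTop {g : ℕ → ℝ}
    (hlim : Tendsto (fun n : ℕ => g n / n) atTop (𝓝 0)) (k : ℕ) :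
    Tendsto (fun n : ℕ => |g ((n + 1) * k)| / (n + 1)) atTop (𝓝 0) := by
  rcases Nat.eq_zero_or_pos k with rfl | hk
  · have hconst := tendsto_one_div_add_atTop_nhds_zero_nat.const_mul |g 0|
    rw [mul_zero] at hconst
    simpa only [mul_zero, mul_one_div] using hconst
  have hsub : Tendsto (fun n : ℕ => (n + 1) * k) atTop atTop :=
    tendsto_atTop_mono (fun n => n.le_succ.trans (Nat.le_mul_of_pos_right _ hk)) tendsto_id
  have hscaled := ((hlim.comp hsub).abs).const_mul (k : ℝ)
  rw [abs_zero, mul_zero] at hscaled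
  refine hscaled.congr fun n => ?_
  have hk' : (0 : ℝ) < k := by exact_mod_cast hk
  simp only [Function.comp_apply, Nat.cast_mul, Nat.cast_add, Nat.cast_one, abs_div]
  rw [abs_of_pos (by positivity : (0 : ℝ) < (n + 1) * k)]
  field_simp

theorem abs_le_of_tendsto_div_atTop {g : ℕ → ℝ} {C : ℝ}
    (hg : ∀ a b, |g (a + b) - g a - g b| ≤ C)
    (hlim : Tendsto (fun n : ℕ => g n / n) atTop (𝓝 0)) (k : ℕ) : |g k| ≤ C := by
  have hbound := abs_le_abs_map_succ_nsmul_div_add hg k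
  simp only [smul_eq_mul] at hbound
  simpa using ge_of_tendsto ((tendsto_abs_map_succ_mul_div_atTop hlim k).add_const C)
    (Eventually.of_forall hbound)

theorem near_endo_limit_zero_iff_bounded (f : ℤ → ℤ)
    (h : ∃ C : ℤ, 0 < C ∧ ∀ a b : ℤ, |f (a + b) - f a - f b| < C) :
    Filter.Tendsto (fun n : ℕ => (f n : ℝ) / n) Filter.atTop (nhds 0) ↔
      ∃ B : ℤ, ∀ n : ℤ, |f n| ≤ B := by
  obtain ⟨C, hC, hdefect⟩ := h
  have hf : ∀ a b : ℤ, ‖(f (a + b) : ℝ) - f a - f b‖ ≤ C := fun a b => by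
    rw [Real.norm_eq_abs]
    exact_mod_cast (hdefect a b).le
  constructor
  · intro hlim
    have hnat (k : ℕ) : |(f k : ℝ)| ≤ C :=
      abs_le_of_tendsto_div_atTop (fun a b => by simpa using hf a b) hlim k
    refine ⟨3 * C, fun n => ?_⟩
    have hC' : (0 : ℝ) < C := by exact_mod_cast hC
    suffices |(f n : ℝ)| ≤ 3 * C by exact_mod_cast this
    obtain ⟨k, rfl | rfl⟩ := Int.eq_nat_or_neg n
    · linarith [hnat k]
    · have hneg := norm_map_neg_le (f := fun n => (f n : ℝ)) hf k
      simp only [Real.norm_eq_abs] at hneg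
      linarith [hnat k]
  · rintro ⟨B, hB⟩
    refine tendsto_bdd_div_atTop_nhds_zero (b := -B) (B := B) ?_ ?_ tendsto_natCast_atTop_atTop
    all_goals refine Eventually.of_forall fun n => ?_
    · exact_mod_cast (abs_le.mp (hB n)).1
    · exact_mod_cast (abs_le.mp (hB n)).2
end

section
/- If f and g are near-endomorphisms of ℤ, then the function f ∘ g - g ∘ f is bounded; explicitly, |f(g(n)) - g(f(n))| < (2 + |f(1)| + |g(1)| + 2C)·C for all n ∈ ℤ, where C is a common near-endomorphism constant for f and g. -/
lemma ne_abs_zero (f : ℤ → ℤ) (C : ℤ) (hf : ∀ a b : ℤ, |f (a + b) - f a - f b| < C) :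
    |f 0| ≤ C - 1 := by
  have h := hf 0 0
  simp at h
  omega

lemma ne_mul_nat (f : ℤ → ℤ) (C : ℤ) (hf : ∀ a b : ℤ, |f (a + b) - f a - f b| < C) :
    ∀ (j : ℕ) (x : ℤ), |f ((j + 1 : ℤ) * x) - (j + 1 : ℤ) * f x| ≤ (j : ℤ) * (C - 1) := by
  intro j
  induction j with
  | zero => intro x; simp
  | succ m ih =>
    intro x
    have h1 := ih x
    have h2 := hf ((m + 1 : ℤ) * x) x
    have h2' : |f ((m + 1 : ℤ) * x + x) - f ((m + 1 : ℤ) * x) - f x| ≤ C - 1 := by omega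
    have hx : ((m : ℤ) + 1 + 1) * x = (m + 1 : ℤ) * x + x := by ring
    push_cast
    rw [hx]
    rw [abs_le] at *
    constructor <;> nlinarith

lemma ne_mul_pos (f : ℤ → ℤ) (C : ℤ) (hf : ∀ a b : ℤ, |f (a + b) - f a - f b| < C) :
    ∀ k : ℤ, 1 ≤ k → ∀ x : ℤ, |f (k * x) - k * f x| ≤ (k - 1) * (C - 1) := by
  intro k hk x
  obtain ⟨j, hj⟩ : ∃ j : ℕ, k = (j : ℤ) + 1 := ⟨(k - 1).toNat, by omega⟩
  subst hj
  simpa using ne_mul_nat f C hf j x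

lemma ne_mul_all (f : ℤ → ℤ) (C : ℤ) (hC : 0 < C)
    (hf : ∀ a b : ℤ, |f (a + b) - f a - f b| < C) :
    ∀ k x : ℤ, |f (k * x) - k * f x| ≤ (|k| + 1) * (C - 1) := by
  intro k x
  rcases lt_trichotomy k 0 with hk | hk | hk
  · have h1 := ne_mul_pos f C hf (-k) (by omega) x
    have h0 := ne_abs_zero f C hf
    have h2' : |f 0 - f (k * x) - f (-(k * x))| ≤ C - 1 := by
      have := hf (k * x) (-(k * x))
      rw [show k * x + -(k * x) = 0 by ring] at this
      omega
    have hkx : (-k) * x = -(k * x) := by ring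
    rw [hkx] at h1
    have habs : |k| = -k := abs_of_neg hk
    rw [habs, abs_le] at *
    constructor <;> nlinarith
  · subst hk
    have := ne_abs_zero f C hf
    simp only [zero_mul, abs_zero]
    simpa using by omega
  · have h1 := ne_mul_pos f C hf k (by omega) x
    have habs : |k| = k := abs_of_pos hk
    rw [habs]
    have : (k - 1) * (C - 1) ≤ (k + 1) * (C - 1) := by nlinarith
    omega

private lemma tri4 (p q r s : ℤ) : |p + q + r + s| ≤ |p| + |q| + |r| + |s| := by
  calc |p + q + r + s| ≤ |p + q + r| + |s| := abs_add_le _ _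
    _ ≤ (|p + q| + |r|) + |s| := by have := abs_add_le (p+q) r; omega
    _ ≤ ((|p| + |q|) + |r|) + |s| := by have := abs_add_le p q; omega


private lemma final_poly (C P af ag : ℤ) (hC : 0 < C) (hP : 1 ≤ P)
    (haf : 0 ≤ af) (hag : 0 ≤ ag) :
    (2*C-1) * P * (ag * (((2*C-1) - 1) * (C - 1)) + af * (((2*C-1) - 1) * (C - 1)))
      + 2 * (((2*C-1) * P + 1) * (C - 1) * (((2*C-1) - 1) * (C - 1)))
      + (2*C-1) * (2 * (((2*C-1) * P + 1) * (C - 1))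
        + (P * ag + (P + 1) * (C - 1) + 1) * (C - 1)
        + (P * af + (P + 1) * (C - 1) + 1) * (C - 1))
    < (2*C-1) * (2*C-1) * P * ((2 + af + ag + 2 * C) * C) := by
  obtain ⟨d, rfl⟩ : ∃ d, C = d + 1 := ⟨C - 1, by ring⟩
  have hd : (0:ℤ) ≤ d := by omega
  have hp : (0:ℤ) ≤ P - 1 := by omega
  linarith [hp, hd, haf, hag,
    mul_nonneg hp haf, mul_nonneg hp hag, mul_nonneg hp hd,
    mul_nonneg (mul_nonneg hp haf) hd, mul_nonneg (mul_nonneg hp hag) hd,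
    mul_nonneg (mul_nonneg hp hd) hd,
    mul_nonneg (mul_nonneg (mul_nonneg hp haf) hd) hd,
    mul_nonneg (mul_nonneg (mul_nonneg hp hag) hd) hd,
    mul_nonneg (mul_nonneg (mul_nonneg hp hd) hd) hd,
    mul_nonneg haf hd, mul_nonneg hag hd, mul_nonneg hd hd,
    mul_nonneg (mul_nonneg haf hd) hd, mul_nonneg (mul_nonneg hag hd) hd,
    mul_nonneg (mul_nonneg hd hd) hd]

theorem near_endo_comp_comm (f g : ℤ → ℤ) (C : ℤ) (hC : 0 < C)
    (hf : ∀ a b : ℤ, |f (a + b) - f a - f b| < C)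
    (hg : ∀ a b : ℤ, |g (a + b) - g a - g b| < C) :
    ∀ n : ℤ, |f (g n) - g (f n)| < (2 + |f 1| + |g 1| + 2 * C) * C := by
  have haf : (0:ℤ) ≤ |f 1| := abs_nonneg _
  have hag : (0:ℤ) ≤ |g 1| := abs_nonneg _
  have hd : (0:ℤ) ≤ C - 1 := by omega
  intro n
  rcases eq_or_ne n 0 with rfl | hn
  · -- n = 0 case
    have hg0 : |g 0| ≤ C - 1 := ne_abs_zero g C hg
    have hf0 : |f 0| ≤ C - 1 := ne_abs_zero f C hf
    have h1 := ne_mul_all f C hC hf (g 0) 1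
    have h2 := ne_mul_all g C hC hg (f 0) 1
    rw [mul_one] at h1 h2
    have t1 : |f (g 0) - g (f 0)| ≤ |f (g 0)| + |g (f 0)| := abs_sub _ _
    have t2 : |f (g 0)| - |g 0 * f 1| ≤ |f (g 0) - g 0 * f 1| :=
      abs_sub_abs_le_abs_sub _ _
    have t3 : |g (f 0)| - |f 0 * g 1| ≤ |g (f 0) - f 0 * g 1| :=
      abs_sub_abs_le_abs_sub _ _
    rw [abs_mul] at t2 t3
    have p1 : |g 0| * |f 1| ≤ (C - 1) * |f 1| :=
      mul_le_mul_of_nonneg_right hg0 haf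
    have p2 : |f 0| * |g 1| ≤ (C - 1) * |g 1| :=
      mul_le_mul_of_nonneg_right hf0 hag
    have p3 : (|g 0| + 1) * (C - 1) ≤ C * (C - 1) :=
      mul_le_mul_of_nonneg_right (by omega) hd
    have p4 : (|f 0| + 1) * (C - 1) ≤ C * (C - 1) :=
      mul_le_mul_of_nonneg_right (by omega) hd
    nlinarith [abs_nonneg (f (g 0) - g (f 0))]
  · -- n ≠ 0
    have hP1 : 1 ≤ |n| := Int.one_le_abs (by exact hn)
    set K : ℤ := 2 * C - 1 with hKdef
    have hK0 : (0:ℤ) < K := by omega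
    have hK1 : (1:ℤ) ≤ K := by omega
    have hKn : |K * n| = K * |n| := by
      rw [abs_mul, abs_of_pos hK0]
    -- basic estimates
    have h1 := ne_mul_all f C hC hf (K * n) (g n)
    have h2 := ne_mul_all f C hC hf (g n) (K * n)
    rw [mul_comm (g n) (K * n)] at h2
    have h4 := ne_mul_all g C hC hg (f n) (K * n)
    rw [mul_comm (f n) (K * n)] at h4
    have h5 := ne_mul_all g C hC hg (K * n) (f n)
    have hda := ne_mul_pos f C hf K hK1 n
    have hdb := ne_mul_pos g C hg K hK1 n
    have hal := ne_mul_all f C hC hf (K * n) 1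
    have hbe := ne_mul_all g C hC hg (K * n) 1
    rw [mul_one] at hal hbe
    have hfn := ne_mul_all f C hC hf n 1
    have hgn := ne_mul_all g C hC hg n 1
    rw [mul_one] at hfn hgn
    rw [hKn] at h1 h5 hal hbe
    -- bounds on |f n|, |g n|
    have haa : |f n| ≤ |n| * |f 1| + (|n| + 1) * (C - 1) := by
      have := abs_sub_abs_le_abs_sub (f n) (n * f 1)
      rw [abs_mul] at this
      omega
    have hbb : |g n| ≤ |n| * |g 1| + (|n| + 1) * (C - 1) := by
      have := abs_sub_abs_le_abs_sub (g n) (n * g 1)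
      rw [abs_mul] at this
      omega
    -- key algebraic identity
    have key : K * K * n * (f (g n) - g (f n)) =
        K * n * (g 1 * (f (K * n) - K * f n) - f 1 * (g (K * n) - K * g n))
        + ((g (K * n) - K * n * g 1) * (f (K * n) - K * f n)
            - (f (K * n) - K * n * f 1) * (g (K * n) - K * g n))
        + K * ((K * n * f (g n) - f (K * n * g n)) + (f (K * n * g n) - g n * f (K * n))
            + (f n * g (K * n) - g (K * n * f n)) + (g (K * n * f n) - K * n * g (f n))) := by
      ring
    -- triangle-inequality assembly
    have TA : |K * n * (g 1 * (f (K * n) - K * f n) - f 1 * (g (K * n) - K * g n))|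
        ≤ K * |n| * (|g 1| * ((K - 1) * (C - 1)) + |f 1| * ((K - 1) * (C - 1))) := by
      rw [abs_mul, hKn]
      have i1 : |g 1 * (f (K * n) - K * f n)| ≤ |g 1| * ((K - 1) * (C - 1)) := by
        rw [abs_mul]; exact mul_le_mul_of_nonneg_left hda hag
      have i2 : |f 1 * (g (K * n) - K * g n)| ≤ |f 1| * ((K - 1) * (C - 1)) := by
        rw [abs_mul]; exact mul_le_mul_of_nonneg_left hdb haf
      have i3 := (abs_sub (g 1 * (f (K * n) - K * f n)) (f 1 * (g (K * n) - K * g n))).trans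
        (add_le_add i1 i2)
      exact mul_le_mul_of_nonneg_left i3 (by positivity)
    have TB : |(g (K * n) - K * n * g 1) * (f (K * n) - K * f n)
            - (f (K * n) - K * n * f 1) * (g (K * n) - K * g n)|
        ≤ (K * |n| + 1) * (C - 1) * ((K - 1) * (C - 1))
          + (K * |n| + 1) * (C - 1) * ((K - 1) * (C - 1)) := by
      have i1 : |(g (K * n) - K * n * g 1) * (f (K * n) - K * f n)|
          ≤ (K * |n| + 1) * (C - 1) * ((K - 1) * (C - 1)) := by
        rw [abs_mul]
        exact mul_le_mul hbe hda (abs_nonneg _) (by positivity)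
      have i2 : |(f (K * n) - K * n * f 1) * (g (K * n) - K * g n)|
          ≤ (K * |n| + 1) * (C - 1) * ((K - 1) * (C - 1)) := by
        rw [abs_mul]
        exact mul_le_mul hal hdb (abs_nonneg _) (by positivity)
      exact (abs_sub _ _).trans (add_le_add i1 i2)
    have TC : |(K * n * f (g n) - f (K * n * g n)) + (f (K * n * g n) - g n * f (K * n))
            + (f n * g (K * n) - g (K * n * f n)) + (g (K * n * f n) - K * n * g (f n))|
        ≤ (K * |n| + 1) * (C - 1) + (|g n| + 1) * (C - 1)
          + (|f n| + 1) * (C - 1) + (K * |n| + 1) * (C - 1) := by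
      have i1 : |K * n * f (g n) - f (K * n * g n)| ≤ (K * |n| + 1) * (C - 1) := by
        rw [abs_sub_comm]; exact h1
      have i3 : |f n * g (K * n) - g (K * n * f n)| ≤ (|f n| + 1) * (C - 1) := by
        rw [abs_sub_comm]; exact h4
      exact (tri4 _ _ _ _).trans (by gcongr)
    have TCK : |K * ((K * n * f (g n) - f (K * n * g n)) + (f (K * n * g n) - g n * f (K * n))
            + (f n * g (K * n) - g (K * n * f n)) + (g (K * n * f n) - K * n * g (f n)))|
        ≤ K * ((K * |n| + 1) * (C - 1) + (|g n| + 1) * (C - 1)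
          + (|f n| + 1) * (C - 1) + (K * |n| + 1) * (C - 1)) := by
      rw [abs_mul, abs_of_pos hK0]
      exact mul_le_mul_of_nonneg_left TC (le_of_lt hK0)
    have step1 : K * K * |n| * |f (g n) - g (f n)|
        ≤ K * |n| * (|g 1| * ((K - 1) * (C - 1)) + |f 1| * ((K - 1) * (C - 1)))
          + ((K * |n| + 1) * (C - 1) * ((K - 1) * (C - 1))
            + (K * |n| + 1) * (C - 1) * ((K - 1) * (C - 1)))
          + K * ((K * |n| + 1) * (C - 1) + (|g n| + 1) * (C - 1)
            + (|f n| + 1) * (C - 1) + (K * |n| + 1) * (C - 1)) := by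
      have e0 : K * K * |n| * |f (g n) - g (f n)| = |K * K * n * (f (g n) - g (f n))| := by
        rw [abs_mul, abs_mul, abs_mul, abs_of_pos hK0]
      rw [e0, key]
      exact (abs_add_three _ _ _).trans (add_le_add (add_le_add TA TB) TCK)
    -- replace |f n|, |g n|
    have e2m : (|g n| + 1) * (C - 1) ≤ (|n| * |g 1| + (|n| + 1) * (C - 1) + 1) * (C - 1) :=
      mul_le_mul_of_nonneg_right (by omega) hd
    have e4m : (|f n| + 1) * (C - 1) ≤ (|n| * |f 1| + (|n| + 1) * (C - 1) + 1) * (C - 1) :=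
      mul_le_mul_of_nonneg_right (by omega) hd
    have step2 : K * K * |n| * |f (g n) - g (f n)|
        ≤ K * |n| * (|g 1| * ((K - 1) * (C - 1)) + |f 1| * ((K - 1) * (C - 1)))
          + 2 * ((K * |n| + 1) * (C - 1) * ((K - 1) * (C - 1)))
          + K * (2 * ((K * |n| + 1) * (C - 1))
            + (|n| * |g 1| + (|n| + 1) * (C - 1) + 1) * (C - 1)
            + (|n| * |f 1| + (|n| + 1) * (C - 1) + 1) * (C - 1)) := by
      have e2K := mul_le_mul_of_nonneg_left e2m (le_of_lt hK0)
      have e4K := mul_le_mul_of_nonneg_left e4m (le_of_lt hK0)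
      linarith [step1, e2K, e4K]
    -- final polynomial estimate
    have final : K * |n| * (|g 1| * ((K - 1) * (C - 1)) + |f 1| * ((K - 1) * (C - 1)))
          + 2 * ((K * |n| + 1) * (C - 1) * ((K - 1) * (C - 1)))
          + K * (2 * ((K * |n| + 1) * (C - 1))
            + (|n| * |g 1| + (|n| + 1) * (C - 1) + 1) * (C - 1)
            + (|n| * |f 1| + (|n| + 1) * (C - 1) + 1) * (C - 1))
        < K * K * |n| * ((2 + |f 1| + |g 1| + 2 * C) * C) := by
      rw [hKdef]
      linarith [final_poly C |n| |f 1| |g 1| hC hP1 haf hag]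
    have combined : K * K * |n| * |f (g n) - g (f n)|
        < K * K * |n| * ((2 + |f 1| + |g 1| + 2 * C) * C) := lt_of_le_of_lt step2 final
    have hpos : (0:ℤ) < K * K * |n| := by positivity
    exact lt_of_mul_lt_mul_left combined (le_of_lt hpos)
end

section
/- If f, g are near-endomorphisms of ℤ, then λ(f ∘ g) = λ(f)·λ(g), where λ(h) = lim_{n→∞} h(n)/n. -/
/-!
A near-endomorphism `f` with defect `C` stays within `O(C)` of the linear map `k ↦ λ(f) k`:
from `|f (m n) - m f n| ≤ (m - 1) C` one gets `|f n / n - λ(f)| ≤ C / n` by letting `m → ∞`.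
Hence `f (g n) = λ(f) g n + O(1) = λ(f) λ(g) n + O(1)`, and dividing by `n` gives the claim.
-/

open Filter Topology

def IsNearEndo (f : ℤ → ℤ) (C : ℤ) : Prop :=
  ∀ a b : ℤ, |f (a + b) - f a - f b| ≤ C

namespace IsNearEndo

variable {f : ℤ → ℤ} {C : ℤ}

theorem abs_map_zero_le (hf : IsNearEndo f C) : |f 0| ≤ C := by
  simpa using hf 0 0

theorem nonneg (hf : IsNearEndo f C) : 0 ≤ C :=
  (abs_nonneg _).trans hf.abs_map_zero_le

theorem abs_map_neg_add_map_le (hf : IsNearEndo f C) (k : ℤ) : |f (-k) + f k| ≤ 2 * C := by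
  have hk : |f 0 - f k - f (-k)| ≤ C := by simpa using hf k (-k)
  calc |f (-k) + f k| = |f 0 - (f 0 - f k - f (-k))| := by ring_nf
    _ ≤ |f 0| + |f 0 - f k - f (-k)| := abs_sub _ _
    _ ≤ 2 * C := by linarith [hf.abs_map_zero_le]

theorem abs_map_mul_sub_le (hf : IsNearEndo f C) (m : ℕ) (k : ℤ) :
    |f ((m + 1) * k) - (m + 1) * f k| ≤ m * C := by
  induction m with
  | zero => simp
  | succ m ih =>
    have hstep := hf ((m + 1) * k) k
    calc |f ((↑(m + 1) + 1) * k) - (↑(m + 1) + 1) * f k|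
        = |(f ((m + 1) * k + k) - f ((m + 1) * k) - f k) + (f ((m + 1) * k) - (m + 1) * f k)| := by
          push_cast; ring_nf
      _ ≤ C + m * C := (abs_add_le _ _).trans (add_le_add hstep ih)
      _ = ↑(m + 1) * C := by push_cast; ring

theorem abs_div_sub_div_le (hf : IsNearEndo f C) (m : ℕ) {n : ℕ} (hn : 0 < n) :
    |(f ((m + 1) * n) : ℝ) / ((m + 1) * n) - f n / n| ≤ C / n := by
  have hn' : (0 : ℝ) < n := by exact_mod_cast hn
  have hC : (0 : ℝ) ≤ C := by exact_mod_cast hf.nonneg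
  have hpos : (0 : ℝ) < (m + 1) * n := mul_pos m.cast_add_one_pos hn'
  have hmul : |(f ((m + 1) * n) : ℝ) - (m + 1) * f n| ≤ m * C := by
    exact_mod_cast hf.abs_map_mul_sub_le m n
  have heq : (f ((m + 1) * n) : ℝ) / ((m + 1) * n) - f n / n
      = ((f ((m + 1) * n) : ℝ) - (m + 1) * f n) / ((m + 1) * n) := by
    field_simp
  rw [heq, abs_div, abs_of_pos hpos]
  calc |(f ((m + 1) * n) : ℝ) - (m + 1) * f n| / ((m + 1) * n) ≤ m * C / ((m + 1) * n) := by
        gcongr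
    _ ≤ C / n := by
        rw [div_le_div_iff₀ hpos hn']
        nlinarith [mul_nonneg hC hn'.le]

theorem abs_map_natCast_sub_mul_le (hf : IsNearEndo f C) {L : ℝ}
    (hL : Tendsto (fun n : ℕ => (f n : ℝ) / n) atTop (𝓝 L)) (n : ℕ) :
    |(f n : ℝ) - L * n| ≤ C := by
  rcases n.eq_zero_or_pos with rfl | hn
  · simpa using (Int.cast_le (R := ℝ)).2 hf.abs_map_zero_le
  have hn' : (0 : ℝ) < n := by exact_mod_cast hn
  have hsub : Tendsto (fun m : ℕ => (f ((m + 1) * n) : ℝ) / ((m + 1) * n)) atTop (𝓝 L) := by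
    have hmul : Tendsto (fun m : ℕ => (m + 1) * n) atTop atTop :=
      tendsto_atTop_mono (fun m => Nat.le_mul_of_pos_right _ hn) (tendsto_add_atTop_nat 1)
    refine (hL.comp hmul).congr fun m => ?_
    simp
  have hlim : |L - f n / n| ≤ C / n :=
    le_of_tendsto ((hsub.sub_const _).abs) (Eventually.of_forall (hf.abs_div_sub_div_le · hn))
  calc |(f n : ℝ) - L * n| = |(L - f n / n) * n| := by rw [abs_sub_comm]; field_simp
    _ = |L - f n / n| * n := by rw [abs_mul, abs_of_pos hn']
    _ ≤ C / n * n := by gcongr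
    _ = C := div_mul_cancel₀ _ hn'.ne'

theorem abs_map_sub_mul_le (hf : IsNearEndo f C) {L : ℝ}
    (hL : Tendsto (fun n : ℕ => (f n : ℝ) / n) atTop (𝓝 L)) (k : ℤ) :
    |(f k : ℝ) - L * k| ≤ 3 * C := by
  have hC : (0 : ℝ) ≤ C := by exact_mod_cast hf.nonneg
  obtain ⟨n, rfl | rfl⟩ := k.eq_nat_or_neg
  · push_cast
    linarith [hf.abs_map_natCast_sub_mul_le hL n]
  have hneg : |(f (-n) : ℝ) + f n| ≤ 2 * C := by exact_mod_cast hf.abs_map_neg_add_map_le n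
  calc |(f (-n) : ℝ) - L * ↑(-(n : ℤ))| = |((f (-n) : ℝ) + f n) - (f n - L * n)| := by
        push_cast; ring_nf
    _ ≤ |(f (-n) : ℝ) + f n| + |(f n : ℝ) - L * n| := abs_sub _ _
    _ ≤ 3 * C := by linarith [hf.abs_map_natCast_sub_mul_le hL n]

end IsNearEndo

theorem tendsto_div_natCast_of_abs_sub_mul_le {u : ℕ → ℝ} {a K : ℝ}
    (h : ∀ n, |u n - a * n| ≤ K) : Tendsto (fun n => u n / n) atTop (𝓝 a) := by
  have hzero : Tendsto (fun n : ℕ => (u n - a * n) / n) atTop (𝓝 0) := by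
    refine squeeze_zero_norm (fun n => ?_) (tendsto_const_div_atTop_nhds_zero_nat K)
    rw [Real.norm_eq_abs, abs_div, Nat.abs_cast]
    exact div_le_div_of_nonneg_right (h n) n.cast_nonneg
  have hsum := (tendsto_const_nhds (x := a)).add hzero
  rw [add_zero] at hsum
  refine hsum.congr' ?_
  filter_upwards [eventually_ne_atTop 0] with n hn
  field_simp
  ring

theorem near_endo_lambda_mul (f g : ℤ → ℤ)
    (hf : ∃ C : ℤ, ∀ a b : ℤ, |f (a + b) - f a - f b| ≤ C)
    (hg : ∃ C : ℤ, ∀ a b : ℤ, |g (a + b) - g a - g b| ≤ C)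
    (L M : ℝ)
    (hL : Filter.Tendsto (fun n : ℕ => (f n : ℝ) / n) Filter.atTop (nhds L))
    (hM : Filter.Tendsto (fun n : ℕ => (g n : ℝ) / n) Filter.atTop (nhds M)) :
    Filter.Tendsto (fun n : ℕ => ((f (g n) : ℝ)) / n) Filter.atTop (nhds (L * M)) := by
  obtain ⟨Cf, hCf⟩ := hf
  obtain ⟨Cg, hCg⟩ := hg
  have hfL := IsNearEndo.abs_map_sub_mul_le hCf hL
  have hgM := IsNearEndo.abs_map_natCast_sub_mul_le hCg hM
  refine tendsto_div_natCast_of_abs_sub_mul_le (K := 3 * Cf + |L| * Cg) fun n => ?_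
  calc |(f (g n) : ℝ) - L * M * n| = |((f (g n) : ℝ) - L * g n) + L * (g n - M * n)| := by
        ring_nf
    _ ≤ |(f (g n) : ℝ) - L * g n| + |L| * |(g n : ℝ) - M * n| := by
        rw [← abs_mul]; exact abs_add_le _ _
    _ ≤ 3 * Cf + |L| * Cg := by gcongr; exacts [hfL _, hgM n]
end

section
/- For every near-endomorphism f of ℤ with lim_{n→∞} f(n) = +∞ (equivalently, λ(f) > 0), there exists a near-endomorphism g of ℤ such that f ∘ g - id is bounded. -/
theorem near_endo_inverse (f : ℤ → ℤ)
    (hf : ∃ C : ℤ, ∀ a b : ℤ, |f (a + b) - f a - f b| ≤ C)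
    (htop : Filter.Tendsto f Filter.atTop Filter.atTop) :
    ∃ g : ℤ → ℤ,
      (∃ C : ℤ, ∀ a b : ℤ, |g (a + b) - g a - g b| ≤ C) ∧
      ∃ B : ℤ, ∀ n : ℤ, |f (g n) - n| ≤ B := by
  obtain ⟨C, hC⟩ := hf
  have hC' : ∀ a b : ℤ, f a + f b - C ≤ f (a + b) ∧ f (a + b) ≤ f a + f b + C := by
    intro a b
    have := abs_le.mp (hC a b)
    omega
  have hC0 : 0 ≤ C := (abs_nonneg _).trans (hC 0 0)
  set B : ℤ := |f 1| + C with hB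
  have hB0 : 0 ≤ B := by positivity
  set S : ℤ → Set ℤ := fun n => {m | n ≤ f m} with hS
  have hne : ∀ n, (S n).Nonempty := fun n => (htop.eventually_ge_atTop n).exists
  have hbdd : ∀ n, BddBelow (S n) := by
    intro n
    obtain ⟨M, hM⟩ := Filter.eventually_atTop.mp
      (htop.eventually_ge_atTop (f 0 + C + |n| + 1))
    refine ⟨-M, fun m hm => ?_⟩
    by_contra h
    push_neg at h
    have h1 : M ≤ -m := by omega
    have h2 := hM (-m) h1
    have h3 := (hC' m (-m)).1
    rw [add_neg_cancel] at h3
    have h4 : -|n| ≤ n := neg_abs_le n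
    have h5 : n ≤ f m := hm
    omega
  set g : ℤ → ℤ := fun n => sInf (S n) with hg
  have hg1 : ∀ n, n ≤ f (g n) := fun n => Int.csInf_mem (hne n) (hbdd n)
  have hgmin : ∀ n m, m < g n → f m < n := by
    intro n m hm
    by_contra h
    push_neg at h
    have h2 : g n ≤ m := csInf_le (hbdd n) (show m ∈ S n from h)
    omega
  have hg2 : ∀ n, f (g n) ≤ n + B := by
    intro n
    have h1 := (hC' (g n - 1) 1).2
    have h2 : g n - 1 + 1 = g n := by ring
    rw [h2] at h1
    have h3 := hgmin n (g n - 1) (by omega)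
    have h4 : f 1 ≤ |f 1| := le_abs_self _
    omega
  set D : ℤ := 2 * B + C with hD
  obtain ⟨K, hK⟩ := Filter.eventually_atTop.mp (htop.eventually_ge_atTop (D + C + 1))
  set K' : ℤ := max K 1 with hK'
  have hK'1 : 1 ≤ K' := le_max_right _ _
  have hKK' : K ≤ K' := le_max_left _ _
  have hinj : ∀ x y : ℤ, |f x - f y| ≤ D → |x - y| ≤ K' := by
    intro x y h
    have h' := abs_le.mp h
    rw [abs_le]
    constructor
    · by_contra hc
      push_neg at hc
      have h1 : K ≤ y - x := by omega
      have h2 := hK (y - x) h1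
      have h3 := (hC' x (y - x)).1
      have h4 : x + (y - x) = y := by ring
      rw [h4] at h3
      omega
    · by_contra hc
      push_neg at hc
      have h1 : K ≤ x - y := by omega
      have h2 := hK (x - y) h1
      have h3 := (hC' y (x - y)).1
      have h4 : y + (x - y) = x := by ring
      rw [h4] at h3
      omega
  refine ⟨g, ⟨K', fun a b => ?_⟩, ⟨B, fun n => ?_⟩⟩
  · have h1 := hg1 a
    have h2 := hg2 a
    have h3 := hg1 b
    have h4 := hg2 b
    have h5 := hg1 (a + b)
    have h6 := hg2 (a + b)
    have h7 := hC' (g a) (g b)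
    have h8 : |f (g (a + b)) - f (g a + g b)| ≤ D := by
      rw [abs_le]
      omega
    have h9 := hinj (g (a + b)) (g a + g b) h8
    rw [sub_sub]
    exact h9
  · have h1 := hg1 n
    have h2 := hg2 n
    rw [abs_le]
    omega
end

section
/- For any near-endomorphism f of ℤ, exactly one of the following holds: f is bounded; for every C > 0 there exists N such that f(n) > C for all n > N; or for every C > 0 there exists N such that -f(n) > C for all n > N. -/
/-!
If `f` has defect at most `C` and `C < f a` for some `a > 0`, then `f (k * a)` grows at least
like `k * (f a - C) ≥ k`; writing `n = q * a + r` with `0 ≤ r < a` and bounding `f r` from below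
on the finitely many residues shows `f n → +∞`. An unbounded `f` has such an `a` for `f` or `-f`,
because `f n + f (-n)` stays within `2 * C` of `0`.
-/

def IsNearEndoWith (f : ℤ → ℤ) (C : ℤ) : Prop :=
  ∀ a b : ℤ, |f (a + b) - f a - f b| ≤ C

def DivergesToTop (g : ℤ → ℤ) : Prop :=
  ∀ C : ℤ, 0 < C → ∃ N : ℤ, ∀ n > N, C < g n

namespace DivergesToTop

variable {g : ℤ → ℤ}

theorem not_bddAbove (hg : DivergesToTop g) : ¬∃ B : ℤ, ∀ n, g n ≤ B := by
  rintro ⟨B, hB⟩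
  obtain ⟨N, hN⟩ := hg (|B| + 1) (by positivity)
  have := hN (N + 1) (by omega)
  have := hB (N + 1)
  have := le_abs_self B
  omega

theorem not_neg (hg : DivergesToTop g) : ¬DivergesToTop (fun n => -g n) := by
  intro hg'
  obtain ⟨N, hN⟩ := hg 1 one_pos
  obtain ⟨N', hN'⟩ := hg' 1 one_pos
  have : 1 < g (max N N' + 1) := hN _ (by omega)
  have : 1 < -g (max N N' + 1) := hN' _ (by omega)
  omega

end DivergesToTop

namespace IsNearEndoWith

variable {f : ℤ → ℤ} {C : ℤ}

theorem neg (hf : IsNearEndoWith f C) : IsNearEndoWith (fun n => -f n) C := fun a b => by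
  rw [show -f (a + b) - -f a - -f b = -(f (a + b) - f a - f b) by ring, abs_neg]
  exact hf a b

theorem abs_apply_zero_le (hf : IsNearEndoWith f C) : |f 0| ≤ C := by
  simpa using hf 0 0

theorem apply_add_ge (hf : IsNearEndoWith f C) (a b : ℤ) : f a + f b - C ≤ f (a + b) := by
  have := abs_le.mp (hf a b)
  omega

theorem abs_apply_le_abs_apply_neg (hf : IsNearEndoWith f C) (n : ℤ) :
    |f n| ≤ |f (-n)| + 2 * C := by
  have h0 := abs_le.mp hf.abs_apply_zero_le
  have h := abs_le.mp (hf n (-n))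
  rw [add_neg_cancel] at h
  rcases abs_cases (f n) with ⟨hn, _⟩ | ⟨hn, _⟩ <;>
    rcases abs_cases (f (-n)) with ⟨hn', _⟩ | ⟨hn', _⟩ <;> omega

theorem mul_sub_le_apply_mul (hf : IsNearEndoWith f C) (a : ℤ) :
    ∀ k : ℤ, 0 ≤ k → k * (f a - C) - C ≤ f (k * a) := by
  refine Int.leInduction ?_ fun k _ ih => ?_
  · have := abs_le.mp hf.abs_apply_zero_le
    simp only [zero_mul]
    omega
  · have := hf.apply_add_ge (k * a) a
    rw [add_one_mul k a]
    linarith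

theorem divergesToTop (hf : IsNearEndoWith f C) {a : ℤ} (ha : 0 < a) (hfa : C < f a) :
    DivergesToTop f := by
  intro K _
  obtain ⟨m, hm⟩ := ((Set.finite_Ico 0 a).image f).bddBelow
  set T := max (K + 2 * C - m) 0
  refine ⟨(T + 1) * a, fun n hn => ?_⟩
  have hq : T + 1 ≤ n / a := (Int.le_ediv_iff_mul_le ha).mpr hn.le
  have hr : m ≤ f (n % a) :=
    hm ⟨n % a, ⟨Int.emod_nonneg n ha.ne', Int.emod_lt_of_pos n ha⟩, rfl⟩
  have hqa := hf.mul_sub_le_apply_mul a (n / a) (by omega)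
  have hsplit := hf.apply_add_ge (n / a * a) (n % a)
  rw [Int.ediv_mul_add_emod] at hsplit
  have : n / a ≤ n / a * (f a - C) := le_mul_of_one_le_right (by omega) (by omega)
  have := le_max_left (K + 2 * C - m) 0
  omega

theorem exists_pos_lt_abs (hf : IsNearEndoWith f C) (hbdd : ¬∃ B : ℤ, ∀ n, |f n| ≤ B) :
    ∃ a, 0 < a ∧ C < |f a| := by
  by_contra! hsmall
  refine hbdd ⟨3 * C, fun n => ?_⟩
  have h0 := hf.abs_apply_zero_le
  have := abs_nonneg (f 0)
  rcases lt_trichotomy n 0 with hn | rfl | hn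
  · have := hf.abs_apply_le_abs_apply_neg n
    have := hsmall (-n) (by omega)
    omega
  · omega
  · have := hsmall n hn
    omega

end IsNearEndoWith

theorem near_endo_trichotomy (f : ℤ → ℤ)
    (hf : ∃ C : ℤ, ∀ a b : ℤ, |f (a + b) - f a - f b| ≤ C) :
    (((∃ B : ℤ, ∀ n : ℤ, |f n| ≤ B) ∧
        ¬(∀ C : ℤ, 0 < C → ∃ N : ℤ, ∀ n > N, C < f n) ∧
        ¬(∀ C : ℤ, 0 < C → ∃ N : ℤ, ∀ n > N, C < -f n)) ∨
      (¬(∃ B : ℤ, ∀ n : ℤ, |f n| ≤ B) ∧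
        (∀ C : ℤ, 0 < C → ∃ N : ℤ, ∀ n > N, C < f n) ∧
        ¬(∀ C : ℤ, 0 < C → ∃ N : ℤ, ∀ n > N, C < -f n)) ∨
      (¬(∃ B : ℤ, ∀ n : ℤ, |f n| ≤ B) ∧
        ¬(∀ C : ℤ, 0 < C → ∃ N : ℤ, ∀ n > N, C < f n) ∧
        (∀ C : ℤ, 0 < C → ∃ N : ℤ, ∀ n > N, C < -f n))) := by
  obtain ⟨C, hC⟩ := hf
  replace hC : IsNearEndoWith f C := hC
  by_cases hbdd : ∃ B : ℤ, ∀ n, |f n| ≤ B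
  · obtain ⟨B, hB⟩ := hbdd
    refine Or.inl ⟨⟨B, hB⟩, fun h => ?_, fun h => ?_⟩
    · exact DivergesToTop.not_bddAbove h ⟨B, fun n => (le_abs_self _).trans (hB n)⟩
    · exact DivergesToTop.not_bddAbove h ⟨B, fun n => (neg_le_abs _).trans (hB n)⟩
  obtain ⟨a, ha, hfa⟩ := hC.exists_pos_lt_abs hbdd
  rcases lt_abs.mp hfa with hpos | hneg
  · have htop := hC.divergesToTop ha hpos
    exact Or.inr (Or.inl ⟨hbdd, htop, htop.not_neg⟩)
  · have hbot := hC.neg.divergesToTop ha hneg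
    exact Or.inr (Or.inr ⟨hbdd, fun h => DivergesToTop.not_neg h hbot, hbot⟩)
end

section
/- If a near-endomorphism f satisfies: the set {f(n) : n ∈ ℕ} contains infinitely many positive values, then for every C > 0 there exists N such that f(n) > C for all n > N. -/
theorem near_endo_positive_equiv (f : ℤ → ℤ)
    (hf : ∃ C : ℤ, ∀ a b : ℤ, |f (a + b) - f a - f b| ≤ C)
    (hpos : {k : ℤ | 0 < k ∧ ∃ n : ℕ, f n = k}.Infinite) :
    ∀ C : ℤ, 0 < C → ∃ N : ℤ, ∀ n > N, C < f n := by
  obtain ⟨D, hD⟩ := hf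
  have hD0 : 0 ≤ D := le_trans (abs_nonneg _) (hD 0 0)
  have hlow : ∀ a b : ℤ, f a + f b - D ≤ f (a + b) := by
    intro a b
    have := (abs_le.mp (hD a b)).1
    linarith
  -- unboundedness of f on ℕ
  have hub : ∀ M : ℤ, ∃ m : ℕ, M < f m := by
    intro M
    by_contra h
    push_neg at h
    apply hpos
    apply Set.Finite.subset (Set.finite_Icc 1 M)
    rintro k ⟨hk, n, rfl⟩
    exact ⟨hk, h n⟩
  -- pick m with f m > 2D
  obtain ⟨m, hm⟩ := hub (2 * D)
  have hm0 : m ≠ 0 := by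
    rintro rfl
    have := hD 0 0
    simp at this
    rw [abs_le] at this
    push_cast at hm
    omega
  have hmpos : (0 : ℤ) < (m : ℤ) := by exact_mod_cast Nat.pos_of_ne_zero hm0
  -- multiples grow
  have hmul : ∀ q : ℤ, 1 ≤ q → q * f m - (q - 1) * D ≤ f (q * m) := by
    refine Int.le_induction ?_ ?_
    · simp
    · intro q hq ih
      have h1 : f (q * m) + f m - D ≤ f ((q + 1) * m) := by
        have := hlow (q * m) m
        have he : (q : ℤ) * m + m = (q + 1) * m := by ring
        rwa [he] at this
      have he2 : (q + 1) * f m - (q + 1 - 1) * D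
          = (q * f m - (q - 1) * D) + (f m - D) := by ring
      rw [he2]
      linarith
  -- lower bound on f over [0, m)
  obtain ⟨B, hB0, hB⟩ : ∃ B : ℤ, B ≤ 0 ∧ ∀ r : ℤ, 0 ≤ r → r < m → B ≤ f r := by
    set s : Finset ℤ := insert 0 ((Finset.range m).image (fun r : ℕ => f r))
    refine ⟨s.min' ⟨0, Finset.mem_insert_self _ _⟩, ?_, ?_⟩
    · exact Finset.min'_le _ _ (Finset.mem_insert_self _ _)
    · intro r hr0 hrm
      have : f r ∈ s := by
        apply Finset.mem_insert_of_mem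
        apply Finset.mem_image.mpr
        refine ⟨r.toNat, Finset.mem_range.mpr ?_, by rw [Int.toNat_of_nonneg hr0]⟩
        omega
      exact Finset.min'_le _ _ this
  intro C hC
  refine ⟨(C - B + 1) * m, fun n hn => ?_⟩
  set K : ℤ := C - B + 1 with hK
  have hK1 : 1 ≤ K := by omega
  set q : ℤ := n / m with hq
  set r : ℤ := n % m with hr
  have hr0 : 0 ≤ r := Int.emod_nonneg n (by positivity)
  have hrm : r < m := Int.emod_lt_of_pos n hmpos
  have hqK : K ≤ q := Int.le_ediv_iff_mul_le hmpos |>.mpr (le_of_lt hn)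
  have hq1 : 1 ≤ q := le_trans hK1 hqK
  have hdecomp : (q : ℤ) * m + r = n := by
    rw [hq, hr]; rw [mul_comm]; exact Int.mul_ediv_add_emod n m
  have h1 : f (q * m) + f r - D ≤ f n := by
    have := hlow (q * m) r
    rwa [hdecomp] at this
  have h2 := hmul q hq1
  have h3 := hB r hr0 hrm
  -- f n ≥ q * (f m - D) + B ≥ K + B = C + 1
  have h4 : K * 1 ≤ q * (f m - D) := by
    apply mul_le_mul hqK (by linarith) (by norm_num) (by linarith)
  nlinarith
end

section
/- The function g : ℤ → ℤ counting lattice points in a disk, g(n) = #{(a,b) ∈ ℤ² : a² + b² ≤ n} for n ≥ 0 (and g(n) = 0 for n < 0), is not a near-endomorphism: the set {g(a+b) - g(a) - g(b) : a, b ∈ ℤ} is unbounded. -/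
/-- Number of lattice points in the closed disk of radius `√n`,
interpreted as `0` when the set is infinite or empty (in particular for `n < 0`). -/
noncomputable def latticeCount (n : ℤ) : ℤ :=
  (Set.ncard {p : ℤ × ℤ | p.1 ^ 2 + p.2 ^ 2 ≤ n} : ℤ)

lemma latticeCount_neg {n : ℤ} (h : n < 0) : latticeCount n = 0 := by
  unfold latticeCount
  have : {p : ℤ × ℤ | p.1 ^ 2 + p.2 ^ 2 ≤ n} = ∅ := by
    ext p
    simp only [Set.mem_setOf_eq, Set.mem_empty_iff_false, iff_false, not_le]
    nlinarith [sq_nonneg p.1, sq_nonneg p.2]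
  rw [this, Set.ncard_empty]
  rfl

lemma latticeCount_finite {n : ℤ} (hn : 0 ≤ n) :
    {p : ℤ × ℤ | p.1 ^ 2 + p.2 ^ 2 ≤ n}.Finite := by
  apply Set.Finite.subset ((Set.finite_Icc (-n) n).prod (Set.finite_Icc (-n) n))
  rintro ⟨x, y⟩ h
  simp only [Set.mem_setOf_eq] at h
  have hx : x ^ 2 ≤ n := by nlinarith [sq_nonneg y]
  have hy : y ^ 2 ≤ n := by nlinarith [sq_nonneg x]
  have h1 : -n ≤ x ∧ x ≤ n := by constructor <;> nlinarith [sq_nonneg (x - 1), sq_nonneg (x + 1)]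
  have h2 : -n ≤ y ∧ y ≤ n := by constructor <;> nlinarith [sq_nonneg (y - 1), sq_nonneg (y + 1)]
  exact ⟨Set.mem_Icc.2 h1, Set.mem_Icc.2 h2⟩

lemma latticeCount_lower (k : ℕ) : (2 * k + 1 : ℤ) ≤ latticeCount ((k : ℤ) ^ 2) := by
  unfold latticeCount
  have hsub : (fun t : ℤ => ((0 : ℤ), t)) '' (Set.Icc (-(k : ℤ)) k)
      ⊆ {p : ℤ × ℤ | p.1 ^ 2 + p.2 ^ 2 ≤ (k : ℤ) ^ 2} := by
    rintro ⟨x, y⟩ ⟨t, ht, heq⟩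
    obtain ⟨h1, h2⟩ := Set.mem_Icc.1 ht
    simp only [Prod.mk.injEq] at heq
    obtain ⟨hx, hy⟩ := heq
    simp only [Set.mem_setOf_eq, ← hx, ← hy]
    nlinarith
  have hfin := latticeCount_finite (n := (k : ℤ) ^ 2) (by positivity)
  have hle := Set.ncard_le_ncard hsub hfin
  have hinj : Function.Injective (fun t : ℤ => ((0 : ℤ), t)) := by
    intro a b h; simpa using h
  have hcard : ((fun t : ℤ => ((0 : ℤ), t)) '' (Set.Icc (-(k : ℤ)) k)).ncard
      = (Set.Icc (-(k : ℤ)) (k : ℤ)).ncard := Set.ncard_image_of_injective _ hinj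
  have hIcc : (Set.Icc (-(k : ℤ)) (k : ℤ)).ncard = 2 * k + 1 := by
    rw [← Finset.coe_Icc, Set.ncard_coe_finset, Int.card_Icc]
    omega
  rw [hcard, hIcc] at hle
  exact_mod_cast hle

theorem lattice_count_not_near_endo :
    ¬ ∃ C : ℤ, ∀ a b : ℤ,
      |latticeCount (a + b) - latticeCount a - latticeCount b| ≤ C := by
  rintro ⟨C, hC⟩
  set k : ℕ := C.toNat + 1 with hk
  have h := hC ((k : ℤ) ^ 2) (-((k : ℤ) ^ 2 + 1))
  have h1 : latticeCount ((k : ℤ) ^ 2 + -((k : ℤ) ^ 2 + 1)) = 0 := by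
    apply latticeCount_neg; ring_nf; norm_num
  have h2 : latticeCount (-((k : ℤ) ^ 2 + 1)) = 0 := by
    apply latticeCount_neg
    have : (0 : ℤ) ≤ (k : ℤ) ^ 2 := by positivity
    linarith
  rw [h1, h2] at h
  have h3 := latticeCount_lower k
  have h4 : latticeCount ((k : ℤ) ^ 2) ≤ C := by
    rw [zero_sub, sub_zero, abs_neg, abs_of_nonneg (by linarith)] at h
    exact h
  have h5 : C < (2 * k + 1 : ℤ) := by
    have := Int.self_le_toNat C
    push_cast [hk]
    omega
  linarith
end
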